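/- Let H = ℍ_{l₁} ⊕ ⋯ ⊕ ℍ_{l_k} with l_i | l_{i−1} for all i (orthogonal direct sum of hyperbolic groups). Then the subgroup Q(H) of Sp(H) generated by transvections acts transitively on the set of elements of H of maximal order l₁. -/

import Mathlib

/-- omega_n = e^{2 pi i/n} as a unit of the complex numbers. -/
noncomputable def omegaU (n : ℕ) : ℂˣ :=
  Units.mk0 (Complex.exp (2 * Real.pi * Complex.I / n)) (Complex.exp_ne_zero _)

/-- Z-bilinearity of a pairing into the unit group of the complex numbers. -/
def IsBilinPairing {H : Type*} [AddCommGroup H] (f : H → H → ℂˣ) : Prop :=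
  (∀ a b c : H, f (a + b) c = f a c * f b c) ∧ (∀ a b c : H, f a (b + c) = f a b * f a c)

/-- Antisymmetry: <a,b> = <b,a>⁻¹. -/
def IsAntisymmPairing {H : Type*} [AddCommGroup H] (f : H → H → ℂˣ) : Prop :=
  ∀ a b : H, f a b = (f b a)⁻¹

/-- Nonsingularity of a pairing: <a,b> = 1 for all b implies a = 0. -/
def IsNonsingularPairing {H : Type*} [AddCommGroup H] (f : H → H → ℂˣ) : Prop :=
  ∀ a : H, (∀ b : H, f a b = 1) → a = 0

/-- The standard pairing on the hyperbolic group H_n = Z/n × Z/n: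
<(i,j),(k,l)> = omega_n^{il - jk}. -/
noncomputable def hypPair (n : ℕ) (a b : ZMod n × ZMod n) : ℂˣ :=
  omegaU n ^ (a.1 * b.2 - a.2 * b.1).val

/-- The isometry group Sp(H) of a pairing, as a subgroup of the automorphism group. -/
def SpGroup {H : Type*} [AddCommGroup H] (f : H → H → ℂˣ) : AddSubgroup (AddAut H) where
  carrier := {e | ∀ a b : H, f (e a) (e b) = f a b}
  zero_mem' := fun _ _ => rfl
  add_mem' := by
    intro e g he hg a b
    have h1 : ∀ x, (e + g) x = e (g x) := fun x => rfl
    rw [h1, h1, he, hg]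
  neg_mem' := by
    intro e he a b
    have := he ((-e) a) ((-e) b)
    simpa using this.symm

/-- e is a transvection s_{b,k} for the pairing f: for some nonzero b and k ∈ ℤ,
e sends a to a - k·j(a)·b where <b,a> = ω_m^{j(a)} and m is the order of b. -/
def IsTransvection {H : Type*} [AddCommGroup H] (f : H → H → ℂˣ) (e : AddAut H) : Prop :=
  ∃ b : H, b ≠ 0 ∧ ∃ k : ℤ, ∀ a : H, ∃ j : ℤ,
    f b a = omegaU (addOrderOf b) ^ j ∧ e a = a - (k * j) • b

/-- e is a transvection s_b (with k = 1) for the pairing f. -/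
def IsTransvection1 {H : Type*} [AddCommGroup H] (f : H → H → ℂˣ) (e : AddAut H) : Prop :=
  ∃ b : H, b ≠ 0 ∧ ∀ a : H, ∃ j : ℤ,
    f b a = omegaU (addOrderOf b) ^ j ∧ e a = a - j • b

/-- The product pairing on the orthogonal direct sum of hyperbolic groups H_{l i}. -/
noncomputable def piPair {k : ℕ} (l : Fin k → ℕ)
    (a b : ∀ i : Fin k, ZMod (l i) × ZMod (l i)) : ℂˣ :=
  ∏ i : Fin k, hypPair (l i) (a i) (b i)

/-!
All values of `piPair l` are `n`-th roots of unity, `n = l₁`, so the pairing is `ω_n ^ B` for an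
alternating nondegenerate `ZMod n`-valued form `B`. If `B a c` is a unit, a scaled transvection
along `a - c` sends `a` to `c`. For `a` of order `n` the map `B a` is onto `ZMod n`, and a
stable-range argument in `ZMod n` produces one `c` with `B a c` and `B b c` both units; then
`a ↦ c ↦ b`.
-/
lemma isPrimitiveRoot_omegaU {n : ℕ} (hn : n ≠ 0) : IsPrimitiveRoot (omegaU n) n :=
  IsPrimitiveRoot.coe_units_iff.mp (Complex.isPrimitiveRoot_exp n hn)

lemma omegaU_pow_val_add {n : ℕ} [NeZero n] (x y : ZMod n) :
    omegaU n ^ (x + y).val = omegaU n ^ x.val * omegaU n ^ y.val := by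
  rw [← pow_add, pow_eq_pow_iff_modEq, ← (isPrimitiveRoot_omegaU (NeZero.ne n)).eq_orderOf,
    ZMod.val_add]
  exact Nat.mod_modEq _ _

lemma omegaU_pow_val_eq_one_iff {n : ℕ} [NeZero n] (z : ZMod n) :
    omegaU n ^ z.val = 1 ↔ z = 0 := by
  rw [(isPrimitiveRoot_omegaU (NeZero.ne n)).pow_eq_one_iff_dvd, ← ZMod.natCast_eq_zero_iff,
    ZMod.natCast_zmod_val]

namespace ZMod

/-- Write `b = w * d` with `w` a unit and `d ∣ n`: `a` is a unit modulo `d`, it lifts to a unit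
`U` modulo `n`, and `U - a` is a multiple of `d`, hence of `b`. -/
theorem exists_isUnit_add_mul {n : ℕ} [NeZero n] {a b : ZMod n} (h : IsCoprime a b) :
    ∃ z, IsUnit (a + z * b) := by
  obtain ⟨d, hd, w, hw, rfl⟩ := eq_unit_mul_divisor b
  have ha : IsUnit (castHom hd (ZMod d) a) := by
    obtain ⟨u, v, huv⟩ := h
    refine IsUnit.of_mul_eq_one_right (castHom hd (ZMod d) u) ?_
    simpa only [map_add, map_mul, map_natCast, natCast_self, mul_zero, add_zero, map_one] using
      congrArg (castHom hd (ZMod d)) huv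
  obtain ⟨U, hU⟩ := unitsMap_surjective hd ha.unit
  obtain ⟨y, hy⟩ : ∃ y : ZMod n, a - (U : ZMod n) = d * y := by
    obtain ⟨A, hA⟩ := intCast_surjective (a - (U : ZMod n))
    have : castHom hd (ZMod d) (A : ZMod n) = 0 := by
      rw [hA, map_sub, castHom_apply (i := (U : ZMod n)), ← unitsMap_val hd, hU, IsUnit.unit_spec,
        sub_self]
    rw [map_intCast, intCast_zmod_eq_zero_iff_dvd] at this
    obtain ⟨Y, rfl⟩ := this
    exact ⟨Y, by rw [← hA]; push_cast; ring⟩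
  refine ⟨-(↑hw.unit⁻¹ * y), ?_⟩
  have : a + -(↑hw.unit⁻¹ * y) * (w * d) = U := by linear_combination hy - y * d * hw.val_inv_mul
  exact this ▸ U.isUnit

end ZMod

section ExponentPairing

variable {H : Type*} [AddCommGroup H] {n : ℕ} [NeZero n] {f : H → H → ℂˣ}

lemma mem_zpowers_omegaU_iff {ζ : ℂˣ} : ζ ∈ Subgroup.zpowers (omegaU n) ↔ ζ ^ n = 1 := by
  rw [(isPrimitiveRoot_omegaU (NeZero.ne n)).zpowers_eq, mem_rootsOfUnity]

noncomputable def expPairing (hf : IsBilinPairing f) (hroot : ∀ x y, f x y ^ n = 1) :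
    H →+ H →+ ZMod n :=
  let χ := (isPrimitiveRoot_omegaU (NeZero.ne n)).zmodEquivZPowers.symm
  AddMonoidHom.mk'
    (fun x ↦ AddMonoidHom.mk'
      (fun y ↦ χ (Additive.ofMul ⟨f x y, mem_zpowers_omegaU_iff.mpr (hroot x y)⟩))
      (fun y z ↦ by rw [← map_add]; exact congrArg χ (Subtype.ext (hf.2 x y z))))
    (fun x x' ↦ by
      ext y
      exact (congrArg χ (Subtype.ext (hf.1 x x' y))).trans (map_add χ _ _))

lemma omegaU_pow_expPairing (hf : IsBilinPairing f) (hroot : ∀ x y, f x y ^ n = 1) (x y : H) :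
    omegaU n ^ (expPairing hf hroot x y).val = f x y := by
  set χ := (isPrimitiveRoot_omegaU (NeZero.ne n)).zmodEquivZPowers
  have := χ.apply_symm_apply (Additive.ofMul ⟨f x y, mem_zpowers_omegaU_iff.mpr (hroot x y)⟩)
  rw [← ZMod.natCast_zmod_val (χ.symm _), IsPrimitiveRoot.zmodEquivZPowers_apply_coe_nat] at this
  exact congrArg (fun z ↦ ((Additive.toMul z : Subgroup.zpowers (omegaU n)) : ℂˣ)) this

lemma expPairing_eq_zero_iff (hf : IsBilinPairing f) (hroot : ∀ x y, f x y ^ n = 1) {x y : H} :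
    expPairing hf hroot x y = 0 ↔ f x y = 1 := by
  rw [← omegaU_pow_val_eq_one_iff, omegaU_pow_expPairing]

end ExponentPairing

section AlternatingForm

variable {H : Type*} [AddCommGroup H] {n : ℕ} (B : H →+ H →+ ZMod n)

lemma apply_swap_eq_neg (hB : ∀ x, B x x = 0) (x y : H) : B y x = -B x y := by
  have := hB (x + y)
  simp only [map_add, AddMonoidHom.add_apply, hB, zero_add, add_zero] at this
  exact eq_neg_of_add_eq_zero_left this

lemma nsmul_eq_zero_of_nondegenerate (hnd : ∀ x, (∀ y, B x y = 0) → x = 0) (x : H) :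
    n • x = 0 :=
  hnd _ fun y ↦ by
    rw [map_nsmul, AddMonoidHom.nsmul_apply, nsmul_eq_mul, ZMod.natCast_self, zero_mul]

lemma addOrderOf_eq_of_isUnit_apply (hnd : ∀ x, (∀ y, B x y = 0) → x = 0) {d a : H}
    (h : IsUnit (B d a)) : addOrderOf d = n := by
  refine Nat.dvd_antisymm (addOrderOf_dvd_of_nsmul_eq_zero
    (nsmul_eq_zero_of_nondegenerate B hnd d)) ?_
  have : (addOrderOf d : ZMod n) * B d a = 0 := by
    rw [← nsmul_eq_mul, ← AddMonoidHom.nsmul_apply, ← map_nsmul, addOrderOf_nsmul_eq_zero,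
      map_zero, AddMonoidHom.zero_apply]
  exact (ZMod.natCast_eq_zero_iff _ _).mp (h.mul_left_eq_zero.mp this)

variable [NeZero n]

/-- The values of `B a` form a subgroup of `ZMod n` of order `m`; then `m • a` pairs trivially
with everything, so the order `n` of `a` divides `m`. -/
lemma exists_apply_eq_one (hnd : ∀ x, (∀ y, B x y = 0) → x = 0) {a : H}
    (ha : addOrderOf a = n) : ∃ c, B a c = 1 := by
  have hkill : Nat.card (B a).range • a = 0 := hnd _ fun y ↦ by
    rw [map_nsmul, AddMonoidHom.nsmul_apply]
    exact congrArg Subtype.val (card_nsmul_eq_zero' (x := (⟨B a y, y, rfl⟩ : (B a).range)))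
  have hcard : Nat.card (B a).range = Nat.card (ZMod n) := by
    refine Nat.dvd_antisymm (AddSubgroup.card_addSubgroup_dvd_card _) ?_
    calc Nat.card (ZMod n) = addOrderOf a := by rw [Nat.card_zmod, ha]
      _ ∣ _ := addOrderOf_dvd_of_nsmul_eq_zero hkill
  show (1 : ZMod n) ∈ (B a).range
  rw [AddSubgroup.eq_top_of_card_eq _ hcard]
  exact AddSubgroup.mem_top 1

/-- With `B a c₁ = B b c₂ = 1`, `s = B a c₂`, `t = B b c₁`, the element
`c = (1 - z s) • c₁ + z • c₂` has `B a c = 1` and `B b c = t + z (1 - s t)`, and `t` is coprime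
to `1 - s t`. -/
lemma exists_isUnit_apply_and_isUnit_apply (hnd : ∀ x, (∀ y, B x y = 0) → x = 0) {a b : H}
    (ha : addOrderOf a = n) (hb : addOrderOf b = n) : ∃ c, IsUnit (B a c) ∧ IsUnit (B b c) := by
  obtain ⟨c₁, h₁⟩ := exists_apply_eq_one B hnd ha
  obtain ⟨c₂, h₂⟩ := exists_apply_eq_one B hnd hb
  obtain ⟨z, hz⟩ := ZMod.exists_isUnit_add_mul (a := B b c₁) (b := 1 - B a c₂ * B b c₁)
    ⟨B a c₂, 1, by ring⟩
  have hpair : ∀ x, B x ((1 - z * B a c₂).val • c₁ + z.val • c₂)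
      = (1 - z * B a c₂) * B x c₁ + z * B x c₂ := fun x ↦ by
    rw [map_add, map_nsmul, map_nsmul, nsmul_eq_mul, nsmul_eq_mul, ZMod.natCast_zmod_val,
      ZMod.natCast_zmod_val]
  refine ⟨(1 - z * B a c₂).val • c₁ + z.val • c₂, ?_, ?_⟩
  · rw [hpair, h₁, mul_one, sub_add_cancel]
    exact isUnit_one
  · rw [hpair, h₂]
    convert hz using 1
    ring

end AlternatingForm

def AddAut.idSubOfSqEqZero {H : Type*} [AddCommGroup H] (g : H →+ H) (hg : ∀ x, g (g x) = 0) :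
    AddAut H where
  toFun x := x - g x
  invFun x := x + g x
  left_inv x := by simp [hg]
  right_inv x := by simp [hg]
  map_add' x y := by simp only [map_add]; abel

section Transvection

variable {H : Type*} [AddCommGroup H] {n : ℕ} [NeZero n] {f : H → H → ℂˣ}
  (B : H →+ H →+ ZMod n)

lemma exists_isTransvection_apply (hfB : ∀ x y, f x y = omegaU n ^ (B x y).val)
    (hB : ∀ x, B x x = 0) {d : H} (hd0 : d ≠ 0) (hd : addOrderOf d = n) (k : ZMod n) :
    ∃ e, IsTransvection f e ∧ ∀ x, e x = x - (k * B d x).val • d := by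
  have hmod : ∀ m : ℕ, (m % n) • d = m • d := fun m ↦ hd ▸ mod_addOrderOf_nsmul d m
  let g : H →+ H := AddMonoidHom.mk' (fun x ↦ (k * B d x).val • d) fun x y ↦ by
    rw [map_add, mul_add, ZMod.val_add, hmod, add_nsmul]
  have hg : ∀ x, g (g x) = 0 := fun x ↦ by
    change (k * B d ((k * B d x).val • d)).val • d = 0
    rw [map_nsmul, hB, smul_zero, mul_zero, ZMod.val_zero, zero_nsmul]
  refine ⟨AddAut.idSubOfSqEqZero g hg, ⟨d, hd0, k.val, fun x ↦ ⟨(B d x).val, ?_, ?_⟩⟩, fun x ↦ rfl⟩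
  · rw [hd, zpow_natCast, hfB]
  · change x - (k * B d x).val • d = x - _
    rw [ZMod.val_mul, hmod, ← natCast_zsmul, Nat.cast_mul]

lemma exists_mem_closure_apply_eq_of_isUnit (hfB : ∀ x y, f x y = omegaU n ^ (B x y).val)
    (hB : ∀ x, B x x = 0) (hnd : ∀ x, (∀ y, B x y = 0) → x = 0) {a c : H} (h : IsUnit (B a c)) :
    ∃ e ∈ AddSubgroup.closure {e | IsTransvection f e}, e a = c := by
  by_cases hac : a = c
  · exact ⟨0, AddSubgroup.zero_mem _, hac⟩
  have hu : IsUnit (B (a - c) a) := by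
    rwa [map_sub, AddMonoidHom.sub_apply, hB, apply_swap_eq_neg B hB, zero_sub, neg_neg]
  have hord := addOrderOf_eq_of_isUnit_apply B hnd hu
  obtain ⟨e, he, hex⟩ :=
    exists_isTransvection_apply B hfB hB (sub_ne_zero.mpr hac) hord (B (a - c) a)⁻¹
  refine ⟨e, AddSubgroup.subset_closure he, ?_⟩
  rw [hex, ZMod.inv_mul_of_unit _ hu, ZMod.val_one_eq_one_mod, ← hord, mod_addOrderOf_nsmul,
    one_nsmul, sub_sub_cancel]

end Transvection

theorem exists_mem_closure_isTransvection_apply_eq {H : Type*} [AddCommGroup H] {n : ℕ}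
    [NeZero n] {f : H → H → ℂˣ} (hf : IsBilinPairing f) (hroot : ∀ x y, f x y ^ n = 1)
    (hself : ∀ x, f x x = 1) (hnd : IsNonsingularPairing f) {a b : H}
    (ha : addOrderOf a = n) (hb : addOrderOf b = n) :
    ∃ e ∈ AddSubgroup.closure {e | IsTransvection f e}, e a = b := by
  set B := expPairing hf hroot
  have hfB : ∀ x y, f x y = omegaU n ^ (B x y).val := fun x y ↦
    (omegaU_pow_expPairing hf hroot x y).symm
  have hB : ∀ x, B x x = 0 := fun x ↦ (expPairing_eq_zero_iff hf hroot).mpr (hself x)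
  have hBnd : ∀ x, (∀ y, B x y = 0) → x = 0 := fun x hx ↦
    hnd x fun y ↦ (expPairing_eq_zero_iff hf hroot).mp (hx y)
  obtain ⟨c, hac, hbc⟩ := exists_isUnit_apply_and_isUnit_apply B hBnd ha hb
  obtain ⟨e₁, he₁, rfl⟩ := exists_mem_closure_apply_eq_of_isUnit B hfB hB hBnd hac
  obtain ⟨e₂, he₂, he₂b⟩ := exists_mem_closure_apply_eq_of_isUnit B hfB hB hBnd hbc
  refine ⟨-e₂ + e₁, add_mem (neg_mem he₂) he₁, ?_⟩
  change e₂.symm (e₁ a) = b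
  rw [← he₂b, e₂.symm_apply_apply]

section HyperbolicPairing

variable {m : ℕ}

lemma hypPair_add_left [NeZero m] (a b c : ZMod m × ZMod m) :
    hypPair m (a + b) c = hypPair m a c * hypPair m b c := by
  rw [hypPair, hypPair, hypPair, ← omegaU_pow_val_add, Prod.fst_add, Prod.snd_add]
  ring_nf

lemma hypPair_add_right [NeZero m] (a b c : ZMod m × ZMod m) :
    hypPair m a (b + c) = hypPair m a b * hypPair m a c := by
  rw [hypPair, hypPair, hypPair, ← omegaU_pow_val_add, Prod.fst_add, Prod.snd_add]
  ring_nf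

lemma hypPair_self (a : ZMod m × ZMod m) : hypPair m a a = 1 := by
  rw [hypPair, mul_comm, sub_self, ZMod.val_zero, pow_zero]

lemma hypPair_zero_right (a : ZMod m × ZMod m) : hypPair m a 0 = 1 := by
  simp [hypPair]

lemma hypPair_pow_eq_one {n : ℕ} (hm : m ≠ 0) (h : m ∣ n) (a b : ZMod m × ZMod m) :
    hypPair m a b ^ n = 1 := by
  rw [hypPair, ← pow_mul, mul_comm, pow_mul, (isPrimitiveRoot_omegaU hm).pow_eq_one_iff_dvd _
    |>.mpr h, one_pow]

lemma eq_zero_of_forall_hypPair_eq_one [NeZero m] {a : ZMod m × ZMod m} (h : ∀ y, hypPair m a y = 1) :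
    a = 0 := by
  have h₁ := h (0, 1)
  have h₂ := h (-1, 0)
  simp only [hypPair, mul_one, mul_zero, mul_neg, sub_zero, zero_sub, neg_neg,
    omegaU_pow_val_eq_one_iff] at h₁ h₂
  exact Prod.ext h₁ h₂

end HyperbolicPairing

section ProductPairing

variable {k : ℕ} {l : Fin k → ℕ}

lemma isBilinPairing_piPair (hl : ∀ i, l i ≠ 0) : IsBilinPairing (piPair l) := by
  have := fun i ↦ NeZero.mk (hl i)
  refine ⟨fun a b c ↦ ?_, fun a b c ↦ ?_⟩ <;>
    simp only [piPair, Pi.add_apply, hypPair_add_left, hypPair_add_right,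
      Finset.prod_mul_distrib]

lemma piPair_pow_eq_one {n : ℕ} (hl : ∀ i, l i ≠ 0) (hdvd : ∀ i, l i ∣ n)
    (a b : ∀ i, ZMod (l i) × ZMod (l i)) : piPair l a b ^ n = 1 := by
  rw [piPair, ← Finset.prod_pow]
  exact Finset.prod_eq_one fun i _ ↦ hypPair_pow_eq_one (hl i) (hdvd i) _ _

lemma piPair_self (a : ∀ i, ZMod (l i) × ZMod (l i)) : piPair l a a = 1 :=
  Finset.prod_eq_one fun i _ ↦ hypPair_self (a i)

lemma piPair_single [DecidableEq (Fin k)] (a : ∀ i, ZMod (l i) × ZMod (l i)) (i : Fin k)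
    (y : ZMod (l i) × ZMod (l i)) : piPair l a (Pi.single i y) = hypPair (l i) (a i) y := by
  rw [piPair, Finset.prod_eq_single i (fun j _ hji ↦ by
    rw [Pi.single_eq_of_ne hji, hypPair_zero_right]) (by simp), Pi.single_eq_same]

lemma isNonsingularPairing_piPair (hl : ∀ i, l i ≠ 0) : IsNonsingularPairing (piPair l) := by
  classical
  intro a ha
  funext i
  have := NeZero.mk (hl i)
  exact eq_zero_of_forall_hypPair_eq_one fun y ↦ piPair_single a i y ▸ ha (Pi.single i y)

end ProductPairing

/-- For H = H_{l₁} ⊕ ⋯ ⊕ H_{l_k} with l_i ∣ l_{i-1}, the subgroup Q(H) generated by the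
transvections acts transitively on the elements of maximal order l₁. -/
theorem stmt13 (k : ℕ) (hk : 0 < k) (l : Fin k → ℕ) (hpos : ∀ i, 0 < l i)
    (hdvd : ∀ i j : Fin k, i ≤ j → l j ∣ l i) :
    ∀ a b : ∀ i : Fin k, ZMod (l i) × ZMod (l i),
      addOrderOf a = l ⟨0, hk⟩ → addOrderOf b = l ⟨0, hk⟩ →
      ∃ e ∈ AddSubgroup.closure
          {e : AddAut (∀ i : Fin k, ZMod (l i) × ZMod (l i)) | IsTransvection (piPair l) e},
        e a = b := by
  intro a b ha hb
  have hl : ∀ i, l i ≠ 0 := fun i ↦ (hpos i).ne'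
  have := NeZero.mk (hl ⟨0, hk⟩)
  exact exists_mem_closure_isTransvection_apply_eq (isBilinPairing_piPair hl)
    (piPair_pow_eq_one hl fun i ↦ hdvd _ i (Nat.zero_le i.val)) piPair_self
    (isNonsingularPairing_piPair hl) ha hb
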